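/- arXiv:2402.02627 — 2 statements merged into one kernel-verified Lean document; each statement's English description precedes it below -/
import Mathlib

section
/- For every deterministic finite automaton M = (Q, Σ, δ, q₀, F) with n states and m input symbols there exists a second-order sigmoid recurrent network with k = n + 1 neurons that robustly simulates the transitions of M: there exist weights W : Fin k → Σ → Fin k → ℝ, biases b : Fin k → ℝ, a state encoding E : Q → (Fin k → ℝ), a designated output neuron index i₀ ∈ Fin k, and a tolerance ε ∈ (0, 1/2), such that (i) for every q ∈ Q, every a ∈ Σ, and every vector h : Fin k → ℝ with ‖h − E q‖_∞ ≤ ε, the updated vector Φ a h defined by (Φ a h) i = σ(∑_{j} (W i a j) · h j + b i), where σ(t) = 1/(1 + exp(−t)), satisfies ‖Φ a h − E (δ q a)‖_∞ ≤ ε, and (ii) (E q) i₀ ≥ 1 − ε whenever q ∈ F and (E q) i₀ ≤ ε whenever q ∉ F. -/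
/-- The logistic sigmoid `σ(t) = 1/(1 + exp(-t))`. -/
noncomputable def logisticSigmoid (t : ℝ) : ℝ := 1 / (1 + Real.exp (-t))

/-!
Encode a state `q` by the indicator vector of its own neuron `s q`, plus an output neuron set to
`1` exactly on accepting states. With the weight `2c · E (δ r a) i` from state neuron `s r` to
neuron `i` under input `a`, and bias `-c`, the pre-activation of neuron `i` at the exact code of
`q` is `±c` according to whether `E (δ q a) i` is `1` or `0`. A perturbation of size `ε` in the
`|Q|` state coordinates moves it by at most `2c|Q|ε ≤ c/2`, so the sigmoid lands within
`exp (-c/2)` of the target, and `c = -2 log ε` makes this `ε` again.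
-/

open Finset

lemma logisticSigmoid_eq_sigmoid : logisticSigmoid = Real.sigmoid := by
  funext t
  rw [logisticSigmoid, Real.sigmoid_def, one_div]

lemma Real.sigmoid_le_exp (x : ℝ) : Real.sigmoid x ≤ Real.exp x := by
  have h := Real.sigmoid_mul_rexp_neg x
  rw [Real.exp_neg, ← div_eq_mul_inv, div_eq_iff (Real.exp_pos x).ne'] at h
  rw [h]
  exact mul_le_of_le_one_left (Real.exp_pos x).le (Real.sigmoid_le_one _)

lemma Real.abs_sigmoid_sub_le_of_boolean {x y c : ℝ} (hy : y = 0 ∨ y = 1)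
    (hx : |x - c * (2 * y - 1)| ≤ c / 2) : |Real.sigmoid x - y| ≤ Real.exp (-(c / 2)) := by
  obtain ⟨hx_le, hx_ge⟩ := abs_le.mp hx
  rcases hy with rfl | rfl
  · rw [sub_zero, abs_of_pos (Real.sigmoid_pos x)]
    exact (Real.sigmoid_le_exp x).trans (Real.exp_le_exp.mpr (by linarith))
  · rw [abs_sub_comm, abs_of_pos (sub_pos.mpr (Real.sigmoid_lt_one x)), ← Real.sigmoid_neg]
    exact (Real.sigmoid_le_exp _).trans (Real.exp_le_exp.mpr (by linarith))

section FlaggedOneHot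

variable {Q ι : Type*} [DecidableEq ι]

def flaggedOneHot (s : Q → ι) (i₀ : ι) (F : Set Q) [DecidablePred (· ∈ F)] (q : Q) (i : ι) : ℝ :=
  if i = s q ∨ (i = i₀ ∧ q ∈ F) then 1 else 0

lemma flaggedOneHot_eq_zero_or_eq_one (s : Q → ι) (i₀ : ι) (F : Set Q) [DecidablePred (· ∈ F)]
    (q : Q) (i : ι) :
    flaggedOneHot s i₀ F q i = 0 ∨ flaggedOneHot s i₀ F q i = 1 := by
  unfold flaggedOneHot
  split_ifs <;> simp

lemma flaggedOneHot_apply_state [DecidableEq Q] {s : Q → ι} (hs : Function.Injective s) {i₀ : ι}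
    (hi₀ : i₀ ∉ Set.range s) (F : Set Q) [DecidablePred (· ∈ F)] (q r : Q) :
    flaggedOneHot s i₀ F q (s r) = if r = q then 1 else 0 := by
  have : s r ≠ i₀ := fun h => hi₀ ⟨r, h⟩
  simp [flaggedOneHot, hs.eq_iff, this]

lemma flaggedOneHot_apply_output {s : Q → ι} {i₀ : ι} (hi₀ : i₀ ∉ Set.range s) (F : Set Q)
    [DecidablePred (· ∈ F)] (q : Q) : flaggedOneHot s i₀ F q i₀ = if q ∈ F then 1 else 0 := by
  have : i₀ ≠ s q := fun h => hi₀ ⟨q, h.symm⟩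
  simp [flaggedOneHot, this]

end FlaggedOneHot

section DfaWeights

variable {Q A ι : Type*} [Fintype Q] [Fintype ι] [DecidableEq ι]
variable (M : DFA A Q) (s : Q → ι) (E : Q → ι → ℝ)

def dfaWeights (c : ℝ) (i : ι) (a : A) (j : ι) : ℝ :=
  2 * c * ∑ r, if s r = j then E (M.step r a) i else 0

lemma sum_dfaWeights_mul (c : ℝ) (i : ι) (a : A) (v : ι → ℝ) :
    ∑ j, dfaWeights M s E c i a j * v j = 2 * c * ∑ r, E (M.step r a) i * v (s r) := by
  simp only [dfaWeights, mul_assoc, ← mul_sum, sum_mul]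
  rw [sum_comm]
  simp [ite_mul]

variable {M s E}

lemma abs_sum_dfaWeights_mul_sub_le [DecidableEq Q] (hE : ∀ q i, E q i = 0 ∨ E q i = 1)
    (hs : ∀ q r, E q (s r) = if r = q then 1 else 0) {c ε : ℝ} (hc : 0 ≤ c) {q : Q}
    {h : ι → ℝ} (hh : ‖h - E q‖ ≤ ε) (i : ι) (a : A) :
    |∑ j, dfaWeights M s E c i a j * h j - 2 * c * E (M.step q a) i|
      ≤ 2 * c * (Fintype.card Q * ε) := by
  have hcode : ∑ r, E (M.step r a) i * E q (s r) = E (M.step q a) i := by simp [hs]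
  have hdev : ∀ r, |E (M.step r a) i * (h (s r) - E q (s r))| ≤ ε := fun r => by
    have hE_le : |E (M.step r a) i| ≤ 1 := by rcases hE (M.step r a) i with h0 | h1 <;> simp [*]
    calc |E (M.step r a) i * (h (s r) - E q (s r))|
        ≤ 1 * ‖(h - E q) (s r)‖ := by
          rw [abs_mul]; exact mul_le_mul hE_le le_rfl (abs_nonneg _) zero_le_one
      _ ≤ ε := by rw [one_mul]; exact (norm_le_pi_norm _ _).trans hh
  calc |∑ j, dfaWeights M s E c i a j * h j - 2 * c * E (M.step q a) i|
      = 2 * c * |∑ r, E (M.step r a) i * (h (s r) - E q (s r))| := by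
        rw [sum_dfaWeights_mul, ← mul_sub, abs_mul,
          abs_of_nonneg (by positivity : (0 : ℝ) ≤ 2 * c)]
        simp only [mul_sub, sum_sub_distrib, hcode]
    _ ≤ 2 * c * (Fintype.card Q * ε) := by
        gcongr
        exact (abs_sum_le_sum_abs _ _).trans
          ((sum_le_sum fun r _ => hdev r).trans_eq (by simp))

theorem dfaWeights_robust [DecidableEq Q] (hE : ∀ q i, E q i = 0 ∨ E q i = 1)
    (hs : ∀ q r, E q (s r) = if r = q then 1 else 0) {c ε : ℝ} (hc : 0 ≤ c)
    (hεQ : 4 * Fintype.card Q * ε ≤ 1) {q : Q} (a : A) {h : ι → ℝ} (hh : ‖h - E q‖ ≤ ε) :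
    ‖(fun i => Real.sigmoid (∑ j, dfaWeights M s E c i a j * h j + -c)) - E (M.step q a)‖
      ≤ Real.exp (-(c / 2)) := by
  refine (pi_norm_le_iff_of_nonneg (Real.exp_pos _).le).mpr fun i => ?_
  rw [Pi.sub_apply, Real.norm_eq_abs]
  refine Real.abs_sigmoid_sub_le_of_boolean (hE _ i) ?_
  calc |∑ j, dfaWeights M s E c i a j * h j + -c - c * (2 * E (M.step q a) i - 1)|
      = |∑ j, dfaWeights M s E c i a j * h j - 2 * c * E (M.step q a) i| := by
        congr 1; ring
    _ ≤ 2 * c * (Fintype.card Q * ε) := abs_sum_dfaWeights_mul_sub_le hE hs hc hh i a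
    _ ≤ c / 2 := by nlinarith

end DfaWeights

theorem o2rnn_simulates_dfa_general
    {Q A : Type} [Fintype Q] (M : DFA A Q)
    (n : ℕ) (hn : Fintype.card Q = n) :
    ∃ (W : Fin (n + 1) → A → Fin (n + 1) → ℝ) (b : Fin (n + 1) → ℝ)
      (E : Q → (Fin (n + 1) → ℝ)) (i₀ : Fin (n + 1)) (ε : ℝ),
      0 < ε ∧ ε < 1 / 2 ∧
      -- (i) robust one-step simulation of the transition function
      (∀ (q : Q) (a : A) (h : Fin (n + 1) → ℝ), ‖h - E q‖ ≤ ε →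
        ‖(fun i : Fin (n + 1) =>
            logisticSigmoid (∑ j : Fin (n + 1), W i a j * h j + b i)) - E (M.step q a)‖ ≤ ε) ∧
      -- (ii) the output neuron `i₀` separates accepting from rejecting states
      (∀ q : Q, q ∈ M.accept → 1 - ε ≤ E q i₀) ∧
      (∀ q : Q, q ∉ M.accept → E q i₀ ≤ ε) := by
  classical
  set s : Q → Fin (n + 1) := fun q => (Fintype.equivFinOfCardEq hn q).castSucc
  have hs : Function.Injective s :=
    (Fin.castSucc_injective n).comp (Fintype.equivFinOfCardEq hn).injective
  have hlast : Fin.last n ∉ Set.range s := fun ⟨q, hq⟩ => Fin.castSucc_ne_last _ hq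
  set ε : ℝ := 1 / (4 * (n + 1))
  have hε₀ : 0 < ε := by positivity
  have hεQ : 4 * Fintype.card Q * ε ≤ 1 := by
    rw [hn, show 4 * (n : ℝ) * ε = n / (n + 1) by simp only [ε]; field_simp]
    exact div_le_one_of_le₀ (by linarith) (by positivity)
  have hε : ε < 1 / 2 := by simp only [ε]; gcongr; linarith [n.cast_nonneg (α := ℝ)]
  set c := -2 * Real.log ε
  have hc : 0 ≤ c := by have := Real.log_nonpos hε₀.le (by linarith); linarith
  have hexp : Real.exp (-(c / 2)) = ε := by
    rw [show -(c / 2) = Real.log ε by ring, Real.exp_log hε₀]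
  refine ⟨dfaWeights M s (flaggedOneHot s (Fin.last n) M.accept) c, fun _ => -c,
    flaggedOneHot s (Fin.last n) M.accept, Fin.last n, ε, hε₀, hε, fun q a h hh => ?_,
    fun q hq => ?_, fun q hq => ?_⟩
  · rw [logisticSigmoid_eq_sigmoid, ← hexp]
    exact dfaWeights_robust (flaggedOneHot_eq_zero_or_eq_one _ _ _)
      (flaggedOneHot_apply_state hs hlast _) hc hεQ a hh
  · rw [flaggedOneHot_apply_output hlast, if_pos hq]; linarith
  · rw [flaggedOneHot_apply_output hlast, if_neg hq]; linarith

/-- For every DFA `M` with `n` states and `m` input symbols there is a second-order sigmoid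
recurrent network with `k = n + 1` neurons that robustly simulates the transitions of `M`. -/
theorem o2rnn_simulates_dfa
    {Q A : Type} [Fintype Q] [Fintype A] (M : DFA A Q)
    (n m : ℕ) (hn : Fintype.card Q = n) (hm : Fintype.card A = m) :
    ∃ (W : Fin (n + 1) → A → Fin (n + 1) → ℝ) (b : Fin (n + 1) → ℝ)
      (E : Q → (Fin (n + 1) → ℝ)) (i₀ : Fin (n + 1)) (ε : ℝ),
      0 < ε ∧ ε < 1 / 2 ∧
      -- (i) robust one-step simulation of the transition function
      (∀ (q : Q) (a : A) (h : Fin (n + 1) → ℝ), ‖h - E q‖ ≤ ε →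
        ‖(fun i : Fin (n + 1) =>
            logisticSigmoid (∑ j : Fin (n + 1), W i a j * h j + b i)) - E (M.step q a)‖ ≤ ε) ∧
      -- (ii) the output neuron `i₀` separates accepting from rejecting states
      (∀ q : Q, q ∈ M.accept → 1 - ε ≤ E q i₀) ∧
      (∀ q : Q, q ∉ M.accept → E q i₀ ≤ ε) :=
  o2rnn_simulates_dfa_general M n hn
end

section
/- Let Σ be a finite alphabet, P ⊆ Σ* a finite prefix-closed set containing the empty string, E ⊆ Σ* a finite suffix-closed set containing the empty string, and T : Σ* → Bool an observation function. For s ∈ P ∪ P·Σ define row(s) : E → Bool by row(s)(e) = T(s·e). Suppose the observation table is closed (for every p ∈ P and a ∈ Σ there exists p' ∈ P with row(p·a) = row(p')) and consistent (for all p₁, p₂ ∈ P with row(p₁) = row(p₂) and all a ∈ Σ, row(p₁·a) = row(p₂·a)). Then the hypothesis DFA M with state set {row(p) : p ∈ P}, start state row(ε), accepting states {row(p) : T(p) = true}, and transition function δ(row(p), a) = row(p·a) is well defined (δ does not depend on the representative p), and M is consistent with the table: for every s ∈ P ∪ P·Σ and every e ∈ E, M accepts s·e if and only if T(s·e) = true.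 -/
/-!
Every state of the hypothesis automaton is a row `r`, and the row predicts the automaton's
behaviour from that state: for `e ∈ E`, the run from `r` on `e` accepts iff `r e = true`.
This is an induction on `e` using only that `E` is suffix-closed: reading `a` moves to
`row (p ++ [a])` for a representative `p` of `r`, whose entry at `e'` is `r (a :: e')`.
Consistency makes the transition independent of the representative, so by prefix-closedness the
run on any `s ∈ P ∪ P·Σ` ends in `row s`, and the run on `s ++ e` accepts iff
`row s e = T (s ++ e)`.
-/

def obsRow {A : Type} (T : List A → Bool) (E : Finset (List A)) (s : List A) :
    {e : List A // e ∈ E} → Bool :=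
  fun e => T (s ++ e.1)

namespace ObservationTable

variable {A : Type} {P E : Finset (List A)} {T : List A → Bool}

variable (P E T) in
abbrev Row := {r : {e : List A // e ∈ E} → Bool // ∃ p ∈ P, obsRow T E p = r}

noncomputable def Row.rep (r : Row P E T) : List A := r.2.choose

theorem Row.rep_mem (r : Row P E T) : r.rep ∈ P := r.2.choose_spec.1

theorem Row.obsRow_rep (r : Row P E T) : obsRow T E r.rep = r.1 := r.2.choose_spec.2

theorem obsRow_append_singleton (s : List A) (a : A) {e : List A} (he : e ∈ E)
    (hae : a :: e ∈ E) : obsRow T E (s ++ [a]) ⟨e, he⟩ = obsRow T E s ⟨a :: e, hae⟩ := by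
  simp [obsRow]

variable (P E T) in
def Closed : Prop := ∀ p ∈ P, ∀ a : A, ∃ p' ∈ P, obsRow T E (p ++ [a]) = obsRow T E p'

variable (P E T) in
def Consistent : Prop := ∀ p₁ ∈ P, ∀ p₂ ∈ P, obsRow T E p₁ = obsRow T E p₂ →
  ∀ a : A, obsRow T E (p₁ ++ [a]) = obsRow T E (p₂ ++ [a])

variable (hPe : [] ∈ P) (hEe : [] ∈ E) (hclosed : Closed P E T)

noncomputable def hypothesisDFA : DFA A (Row P E T) where
  step r a :=
    ⟨obsRow T E (r.rep ++ [a]),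
      let ⟨p', hp', h⟩ := hclosed r.rep r.rep_mem a; ⟨p', hp', h.symm⟩⟩
  start := ⟨obsRow T E [], [], hPe, rfl⟩
  accept := {r | r.1 ⟨[], hEe⟩ = true}

theorem hypothesisDFA_mk_mem_accept {p : List A} (hp : p ∈ P) :
    (⟨obsRow T E p, p, hp, rfl⟩ : Row P E T) ∈ (hypothesisDFA hPe hEe hclosed).accept ↔
      T p = true := by
  simp [hypothesisDFA, obsRow]

theorem hypothesisDFA_step_mk (hconsistent : Consistent P E T) {p : List A} (hp : p ∈ P) (a : A) :
    ((hypothesisDFA hPe hEe hclosed).step ⟨obsRow T E p, p, hp, rfl⟩ a).1 =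
      obsRow T E (p ++ [a]) :=
  hconsistent _ (Row.rep_mem _) p hp (Row.obsRow_rep _) a

theorem hypothesisDFA_eval
    (hPpre : ∀ p ∈ P, ∀ q : List A, q <+: p → q ∈ P)
    (hconsistent : Consistent P E T) {p : List A} (hp : p ∈ P) :
    (hypothesisDFA hPe hEe hclosed).eval p = ⟨obsRow T E p, p, hp, rfl⟩ := by
  induction p using List.reverseRecOn with
  | nil => rfl
  | append_singleton q a ih =>
    have hq : q ∈ P := hPpre _ hp q (List.prefix_append q [a])
    rw [DFA.eval_append_singleton, ih hq]
    exact Subtype.ext (hypothesisDFA_step_mk hPe hEe hclosed hconsistent hq a)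

theorem hypothesisDFA_evalFrom_mem_accept (hEsuf : ∀ e ∈ E, ∀ f : List A, f <:+ e → f ∈ E)
    (r : Row P E T) {e : List A} (he : e ∈ E) :
    (hypothesisDFA hPe hEe hclosed).evalFrom r e ∈ (hypothesisDFA hPe hEe hclosed).accept ↔
      r.1 ⟨e, he⟩ = true := by
  induction e generalizing r with
  | nil => rfl
  | cons a e ih =>
    have he' : e ∈ E := hEsuf _ he e (List.suffix_cons a e)
    rw [DFA.evalFrom_cons, ih _ he']
    change obsRow T E (r.rep ++ [a]) ⟨e, he'⟩ = true ↔ _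
    rw [obsRow_append_singleton _ _ he' he, r.obsRow_rep]

theorem hypothesisDFA_eval_val
    (hPpre : ∀ p ∈ P, ∀ q : List A, q <+: p → q ∈ P)
    (hconsistent : Consistent P E T)
    {s : List A} (hs : s ∈ P ∨ ∃ p ∈ P, ∃ a : A, s = p ++ [a]) :
    ((hypothesisDFA hPe hEe hclosed).eval s).1 = obsRow T E s := by
  rcases hs with hs | ⟨p, hp, a, rfl⟩
  · rw [hypothesisDFA_eval hPe hEe hclosed hPpre hconsistent hs]
  · rw [DFA.eval_append_singleton, hypothesisDFA_eval hPe hEe hclosed hPpre hconsistent hp]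
    exact hypothesisDFA_step_mk hPe hEe hclosed hconsistent hp a

end ObservationTable

open ObservationTable in
theorem lstar_hypothesis_dfa_consistent_general
    {A : Type}
    (P E : Finset (List A)) (T : List A → Bool)
    (hPe : [] ∈ P)
    (hPpre : ∀ p ∈ P, ∀ q : List A, q <+: p → q ∈ P)
    (hEe : [] ∈ E)
    (hEsuf : ∀ e ∈ E, ∀ f : List A, f <:+ e → f ∈ E)
    (hclosed : ∀ p ∈ P, ∀ a : A, ∃ p' ∈ P, obsRow T E (p ++ [a]) = obsRow T E p')
    (hconsistent : ∀ p₁ ∈ P, ∀ p₂ ∈ P, obsRow T E p₁ = obsRow T E p₂ →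
      ∀ a : A, obsRow T E (p₁ ++ [a]) = obsRow T E (p₂ ++ [a])) :
    ∃ M : DFA A {r : {e : List A // e ∈ E} → Bool // ∃ p ∈ P, obsRow T E p = r},
      -- the start state is `row ε`
      M.start = ⟨obsRow T E [], ⟨[], hPe, rfl⟩⟩ ∧
      -- the transition function is well defined on rows and satisfies
      -- `δ(row p, a) = row (p ++ [a])` for every representative `p ∈ P`
      (∀ p (hp : p ∈ P) (a : A),
        (M.step ⟨obsRow T E p, ⟨p, hp, rfl⟩⟩ a).1 = obsRow T E (p ++ [a])) ∧
      -- the accepting states are exactly the rows of those `p ∈ P` with `T p = true`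
      (∀ p (hp : p ∈ P),
        ((⟨obsRow T E p, ⟨p, hp, rfl⟩⟩ :
          {r : {e : List A // e ∈ E} → Bool // ∃ p ∈ P, obsRow T E p = r}) ∈ M.accept
          ↔ T p = true)) ∧
      -- `M` is consistent with the observation table on `(P ∪ P·Σ) · E`
      (∀ s : List A, (s ∈ P ∨ ∃ p ∈ P, ∃ a : A, s = p ++ [a]) →
        ∀ e ∈ E, (s ++ e ∈ M.accepts ↔ T (s ++ e) = true)) := by
  refine ⟨hypothesisDFA hPe hEe hclosed, rfl,
    fun p hp a => hypothesisDFA_step_mk hPe hEe hclosed hconsistent hp a,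
    fun p hp => hypothesisDFA_mk_mem_accept hPe hEe hclosed hp, fun s hs e he => ?_⟩
  rw [DFA.mem_accepts, DFA.eval, DFA.evalFrom_of_append, ← DFA.eval,
    hypothesisDFA_evalFrom_mem_accept hPe hEe hclosed hEsuf _ he,
    hypothesisDFA_eval_val hPe hEe hclosed hPpre hconsistent hs]
  rfl

/-- If the observation table `(P, E, T)` (with `P` finite prefix-closed containing `ε`, `E`
finite suffix-closed containing `ε`) is closed and consistent, then Angluin's hypothesis DFA —
whose states are the rows of elements of `P`, with start state `row ε`, transition
`δ(row p, a) = row (p ++ [a])` (well defined, i.e. independent of the representative `p`), and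
accepting states the rows of those `p` with `T p = true` — exists and is consistent with the
table: for every `s ∈ P ∪ P·Σ` and every `e ∈ E`, it accepts `s ++ e` iff `T (s ++ e) = true`. -/
theorem lstar_hypothesis_dfa_consistent
    {A : Type} [Fintype A]
    (P E : Finset (List A)) (T : List A → Bool)
    (hPe : [] ∈ P)
    (hPpre : ∀ p ∈ P, ∀ q : List A, q <+: p → q ∈ P)
    (hEe : [] ∈ E)
    (hEsuf : ∀ e ∈ E, ∀ f : List A, f <:+ e → f ∈ E)
    (hclosed : ∀ p ∈ P, ∀ a : A, ∃ p' ∈ P, obsRow T E (p ++ [a]) = obsRow T E p')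
    (hconsistent : ∀ p₁ ∈ P, ∀ p₂ ∈ P, obsRow T E p₁ = obsRow T E p₂ →
      ∀ a : A, obsRow T E (p₁ ++ [a]) = obsRow T E (p₂ ++ [a])) :
    ∃ M : DFA A {r : {e : List A // e ∈ E} → Bool // ∃ p ∈ P, obsRow T E p = r},
      -- the start state is `row ε`
      M.start = ⟨obsRow T E [], ⟨[], hPe, rfl⟩⟩ ∧
      -- the transition function is well defined on rows and satisfies
      -- `δ(row p, a) = row (p ++ [a])` for every representative `p ∈ P`
      (∀ p (hp : p ∈ P) (a : A),
        (M.step ⟨obsRow T E p, ⟨p, hp, rfl⟩⟩ a).1 = obsRow T E (p ++ [a])) ∧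
      -- the accepting states are exactly the rows of those `p ∈ P` with `T p = true`
      (∀ p (hp : p ∈ P),
        ((⟨obsRow T E p, ⟨p, hp, rfl⟩⟩ :
          {r : {e : List A // e ∈ E} → Bool // ∃ p ∈ P, obsRow T E p = r}) ∈ M.accept
          ↔ T p = true)) ∧
      -- `M` is consistent with the observation table on `(P ∪ P·Σ) · E`
      (∀ s : List A, (s ∈ P ∨ ∃ p ∈ P, ∃ a : A, s = p ++ [a]) →
        ∀ e ∈ E, (s ++ e ∈ M.accepts ↔ T (s ++ e) = true)) :=
  lstar_hypothesis_dfa_consistent_general P E T hPe hPpre hEe hEsuf hclosed hconsistent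
end
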